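/- Let X and Y be real Hilbert spaces and let S, T : X → Y be bounded linear operators with ‖S − T‖ ≤ ε. Then for every α > 0 and every v ∈ Y, ‖α[(α I + S*S)^{-1} − (α I + T*T)^{-1}] T* v‖ ≤ 2 ε ‖v‖. -/

import Mathlib

open ContinuousLinearMap RealInnerProductSpace Filter

/-- `(α I + T*T)⁻¹` as an operator on `X` (via `Ring.inverse`; for `α > 0` the operator
`α I + T*T` is a unit, so this is the genuine inverse). -/
noncomputable def regInvX {X Y : Type*} [NormedAddCommGroup X] [InnerProductSpace ℝ X]
    [CompleteSpace X] [NormedAddCommGroup Y] [InnerProductSpace ℝ Y] [CompleteSpace Y]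
    (α : ℝ) (T : X →L[ℝ] Y) : X →L[ℝ] X :=
  Ring.inverse (α • (1 : X →L[ℝ] X) + (adjoint T).comp T)

/-- `(α I + T T*)⁻¹` as an operator on `Y`. -/
noncomputable def regInvY {X Y : Type*} [NormedAddCommGroup X] [InnerProductSpace ℝ X]
    [CompleteSpace X] [NormedAddCommGroup Y] [InnerProductSpace ℝ Y] [CompleteSpace Y]
    (α : ℝ) (T : X →L[ℝ] Y) : Y →L[ℝ] Y :=
  Ring.inverse (α • (1 : Y →L[ℝ] Y) + T.comp (adjoint T))

/-! Write `A_S = α I + S*S`. Since `⟪A_S x, x⟫ = α ‖x‖² + ‖S x‖²`, `A_S` is coercive, whence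
`‖α A_S⁻¹ w‖ ≤ ‖w‖` and `‖α A_S⁻¹ S* y‖ ≤ √α ‖y‖`; for `x = A_T⁻¹ T* v` the same identity gives
`‖T x‖ ≤ ‖v‖` and `√α ‖x‖ ≤ ‖v‖`. By the resolvent identity the difference is
`A_S⁻¹ (T*T - S*S) x`, and after splitting `T*T - S*S = (T - S)* T + S* (T - S)` each of the two
terms contributes at most `ε ‖v‖`. -/

section Regularization

variable {X Y : Type*} [NormedAddCommGroup X] [InnerProductSpace ℝ X] [CompleteSpace X]
  [NormedAddCommGroup Y] [InnerProductSpace ℝ Y] [CompleteSpace Y]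

noncomputable def regOp (α : ℝ) (T : X →L[ℝ] Y) : X →L[ℝ] X :=
  α • (1 : X →L[ℝ] X) + (adjoint T).comp T

lemma regInvX_eq_inverse_regOp (α : ℝ) (T : X →L[ℝ] Y) :
    regInvX α T = Ring.inverse (regOp α T) :=
  rfl

lemma regOp_apply (α : ℝ) (T : X →L[ℝ] Y) (x : X) : regOp α T x = α • x + adjoint T (T x) :=
  rfl

lemma inner_regOp_apply_self (α : ℝ) (T : X →L[ℝ] Y) (x : X) :
    ⟪regOp α T x, x⟫ = α * ‖x‖ ^ 2 + ‖T x‖ ^ 2 := by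
  rw [regOp_apply, inner_add_left, real_inner_smul_left, adjoint_inner_left,
    real_inner_self_eq_norm_sq, real_inner_self_eq_norm_sq]

lemma isUnit_regOp {α : ℝ} (hα : 0 < α) (T : X →L[ℝ] Y) : IsUnit (regOp α T) :=
  isUnit_of_forall_le_norm_inner_map _ (c := ⟨α, hα.le⟩) hα fun x => by
    rw [inner_regOp_apply_self, Real.norm_of_nonneg (by positivity)]
    change ‖x‖ ^ 2 * α ≤ _
    nlinarith [sq_nonneg ‖T x‖]

lemma regOp_regInvX_apply {α : ℝ} (hα : 0 < α) (T : X →L[ℝ] Y) (w : X) :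
    regOp α T (regInvX α T w) = w := by
  rw [regInvX_eq_inverse_regOp, ← mul_apply_eq_comp,
    Ring.mul_inverse_cancel _ (isUnit_regOp hα T), one_apply_eq_self]

lemma regInvX_sub_regInvX_apply {α : ℝ} (hα : 0 < α) (S T : X →L[ℝ] Y) (w : X) :
    regInvX α S w - regInvX α T w = regInvX α S ((regOp α T - regOp α S) (regInvX α T w)) := by
  have h := Ring.inverse_sub_inverse (iff_of_true (isUnit_regOp hα S) (isUnit_regOp hα T))
  simpa only [regInvX_eq_inverse_regOp, mul_apply_eq_comp, sub_apply, map_sub] using congr($h w)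

lemma regOp_sub_regOp_apply (α : ℝ) (S T : X →L[ℝ] Y) (x : X) :
    (regOp α T - regOp α S) x = adjoint (T - S) (T x) + adjoint S ((T - S) x) := by
  simp only [sub_apply, regOp_apply, map_sub]
  abel

lemma inner_regInvX_apply {α : ℝ} (hα : 0 < α) (T : X →L[ℝ] Y) (w : X) :
    α * ‖regInvX α T w‖ ^ 2 + ‖T (regInvX α T w)‖ ^ 2 = ⟪w, regInvX α T w⟫ := by
  rw [← inner_regOp_apply_self, regOp_regInvX_apply hα]

lemma norm_smul_regInvX_apply_le {α : ℝ} (hα : 0 < α) (T : X →L[ℝ] Y) (w : X) :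
    ‖α • regInvX α T w‖ ≤ ‖w‖ := by
  set x := regInvX α T w
  have key := inner_regInvX_apply hα T w
  have hwx : ⟪w, x⟫ ≤ ‖w‖ * ‖x‖ := real_inner_le_norm w x
  rw [norm_smul, Real.norm_of_nonneg hα.le]
  rcases (norm_nonneg x).eq_or_lt with hx | hx
  · rw [← hx, mul_zero]
    exact norm_nonneg w
  · exact le_of_mul_le_mul_right (by nlinarith [sq_nonneg ‖T x‖]) hx

lemma mul_sq_norm_add_sq_norm_regInvX_adjoint_le {α : ℝ} (hα : 0 < α) (T : X →L[ℝ] Y) (v : Y) :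
    α * ‖regInvX α T (adjoint T v)‖ ^ 2 + ‖T (regInvX α T (adjoint T v))‖ ^ 2
      ≤ ‖v‖ * ‖T (regInvX α T (adjoint T v))‖ := by
  rw [inner_regInvX_apply hα, adjoint_inner_left]
  exact real_inner_le_norm _ _

lemma norm_apply_regInvX_adjoint_le {α : ℝ} (hα : 0 < α) (T : X →L[ℝ] Y) (v : Y) :
    ‖T (regInvX α T (adjoint T v))‖ ≤ ‖v‖ := by
  have key := mul_sq_norm_add_sq_norm_regInvX_adjoint_le hα T v
  nlinarith [norm_nonneg (T (regInvX α T (adjoint T v))), norm_nonneg v,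
    mul_nonneg hα.le (sq_nonneg ‖regInvX α T (adjoint T v)‖)]

lemma sqrt_mul_norm_regInvX_adjoint_le {α : ℝ} (hα : 0 < α) (T : X →L[ℝ] Y) (v : Y) :
    √α * ‖regInvX α T (adjoint T v)‖ ≤ ‖v‖ := by
  have key := mul_sq_norm_add_sq_norm_regInvX_adjoint_le hα T v
  rw [← pow_le_pow_iff_left₀ (by positivity) (norm_nonneg v) two_ne_zero, mul_pow,
    Real.sq_sqrt hα.le]
  nlinarith [sq_nonneg (‖v‖ - 2 * ‖T (regInvX α T (adjoint T v))‖)]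

lemma norm_smul_regInvX_adjoint_le {α : ℝ} (hα : 0 < α) (T : X →L[ℝ] Y) (v : Y) :
    ‖α • regInvX α T (adjoint T v)‖ ≤ √α * ‖v‖ := by
  rw [norm_smul, Real.norm_of_nonneg hα.le]
  calc α * ‖regInvX α T (adjoint T v)‖ = √α * (√α * ‖regInvX α T (adjoint T v)‖) := by
        rw [← mul_assoc, Real.mul_self_sqrt hα.le]
    _ ≤ √α * ‖v‖ := by grw [sqrt_mul_norm_regInvX_adjoint_le hα T v]

end Regularization

/-- If `‖S - T‖ ≤ ε` then `‖α[(α I + S*S)⁻¹ - (α I + T*T)⁻¹] T* v‖ ≤ 2 ε ‖v‖`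
for every `α > 0` and `v ∈ Y` (cf. the estimate (2.7)). -/
theorem stmt13 {X Y : Type*} [NormedAddCommGroup X] [InnerProductSpace ℝ X] [CompleteSpace X]
    [NormedAddCommGroup Y] [InnerProductSpace ℝ Y] [CompleteSpace Y]
    (S T : X →L[ℝ] Y) (ε : ℝ) (hST : ‖S - T‖ ≤ ε) :
    ∀ α : ℝ, 0 < α → ∀ v : Y,
      ‖α • (regInvX α S ((adjoint T) v) - regInvX α T ((adjoint T) v))‖ ≤ 2 * ε * ‖v‖ := by
  intro α hα v
  have hε : 0 ≤ ε := (norm_nonneg _).trans hST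
  have hTS : ‖T - S‖ ≤ ε := by rwa [norm_sub_rev]
  set x := regInvX α T (adjoint T v)
  rw [regInvX_sub_regInvX_apply hα, regOp_sub_regOp_apply, map_add, smul_add]
  calc _ ≤ ‖α • regInvX α S (adjoint (T - S) (T x))‖
          + ‖α • regInvX α S (adjoint S ((T - S) x))‖ := norm_add_le _ _
    _ ≤ ‖adjoint (T - S) (T x)‖ + √α * ‖(T - S) x‖ :=
        add_le_add (norm_smul_regInvX_apply_le hα S _) (norm_smul_regInvX_adjoint_le hα S _)
    _ ≤ ε * ‖T x‖ + √α * (ε * ‖x‖) := by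
        gcongr
        · exact (le_opNorm _ _).trans (by rw [LinearIsometryEquiv.norm_map]; gcongr)
        · exact (le_opNorm _ _).trans (by gcongr)
    _ = ε * ‖T x‖ + ε * (√α * ‖x‖) := by ring
    _ ≤ ε * ‖v‖ + ε * ‖v‖ := by
        gcongr
        · exact norm_apply_regInvX_adjoint_le hα T v
        · exact sqrt_mul_norm_regInvX_adjoint_le hα T v
    _ = 2 * ε * ‖v‖ := by ring
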